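/- arXiv:0711.3350 — 5 statements merged into one kernel-verified Lean document; each statement's English description precedes it below -/
import Mathlib

section
/- Let (Ω, ℱ, P) be a probability space with a filtration (ℱ_n)_{n ∈ ℕ}, let M = (M_n) and N = (N_n) be uniformly bounded martingales with respect to (ℱ_n), and let σ and τ be stopping times for (ℱ_n) that are bounded above by some n₀ ∈ ℕ. Then E[M_σ · N_τ] = E[M_{σ∧τ} · N_{σ∧τ}], where M_σ denotes the stopped value of M at σ and σ∧τ is the pointwise minimum of the two stopping times. -/
/-!
Put `T = σ ∧ τ`. Pointwise
`M_σ N_τ = M_T N_T + (M_σ - M_T) N_T + (N_τ - N_T) M_T`,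
since on `{σ ≤ τ}` the first increment vanishes and on `{τ ≤ σ}` the second one does.
Each increment term has expectation zero: its bounded factor is `ℱ_T`-measurable, so it can be
pulled out of `E[· | ℱ_T]`, and `E[M_σ | ℱ_T] = M_T` by optional sampling.
-/

open MeasureTheory

namespace MeasureTheory

variable {Ω : Type*} {m0 : MeasurableSpace Ω} {P : Measure Ω} {ℱ : Filtration ℕ m0}
  {M N : ℕ → Ω → ℝ} {σ τ T : Ω → WithTop ℕ}

theorem StronglyAdapted.stronglyMeasurable_stoppedValue (hM : StronglyAdapted ℱ M)
    (hT : IsStoppingTime ℱ T) : StronglyMeasurable[hT.measurableSpace] (stoppedValue M T) :=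
  (measurable_stoppedValue hM.isStronglyProgressive_of_discrete hT).stronglyMeasurable

theorem StronglyAdapted.integrable_mul_stoppedValue_of_bdd (hM : StronglyAdapted ℱ M)
    (hT : IsStoppingTime ℱ T) {C : ℝ} (hMbd : ∀ n ω, |M n ω| ≤ C) {f : Ω → ℝ}
    (hf : Integrable f P) : Integrable (f * stoppedValue M T) P :=
  hf.mul_bdd
    ((hM.stronglyMeasurable_stoppedValue hT).mono hT.measurableSpace_le).aestronglyMeasurable
    (ae_of_all _ fun ω => hMbd _ ω)

namespace Martingale

theorem integral_sub_stoppedValue_mul_eq_zero [IsFiniteMeasure P] (hM : Martingale M ℱ P)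
    (hσ : IsStoppingTime ℱ σ) (hT : IsStoppingTime ℱ T) (hTσ : T ≤ σ) {n : ℕ}
    (hσn : ∀ ω, σ ω ≤ n) {g : Ω → ℝ} (hg : StronglyMeasurable[hT.measurableSpace] g)
    (hint : Integrable ((stoppedValue M σ - stoppedValue M T) * g) P) :
    ∫ ω, (stoppedValue M σ ω - stoppedValue M T ω) * g ω ∂P = 0 := by
  have hσi : Integrable (stoppedValue M σ) P := hM.submartingale.integrable_stoppedValue hσ hσn
  have hTi : Integrable (stoppedValue M T) P :=
    hM.submartingale.integrable_stoppedValue hT fun ω => (hTσ ω).trans (hσn ω)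
  have hcond_zero : P[stoppedValue M σ - stoppedValue M T | hT.measurableSpace] =ᵐ[P] 0 := by
    filter_upwards [condExp_sub hσi hTi hT.measurableSpace,
      hM.stoppedValue_ae_eq_condExp_of_le hσ hT hTσ hσn] with ω hsub hsampling
    rw [hsub, Pi.sub_apply, condExp_of_stronglyMeasurable hT.measurableSpace_le
      (hM.stronglyAdapted.stronglyMeasurable_stoppedValue hT) hTi, ← hsampling, Pi.zero_apply,
      sub_self]
  calc ∫ ω, (stoppedValue M σ ω - stoppedValue M T ω) * g ω ∂P
      = ∫ ω, P[(stoppedValue M σ - stoppedValue M T) * g | hT.measurableSpace] ω ∂P :=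
        (integral_condExp hT.measurableSpace_le).symm
    _ = ∫ ω, (P[stoppedValue M σ - stoppedValue M T | hT.measurableSpace] * g) ω ∂P :=
        integral_congr_ae (condExp_mul_of_stronglyMeasurable_right hg hint (hσi.sub hTi))
    _ = 0 := by
        rw [integral_eq_zero_of_ae]
        filter_upwards [hcond_zero] with ω hω
        simp [hω]

theorem integral_stoppedValue_mul_eq_min [IsFiniteMeasure P] (hM : Martingale M ℱ P)
    (hN : Martingale N ℱ P) {C : ℝ} (hMbd : ∀ n ω, |M n ω| ≤ C)
    (hNbd : ∀ n ω, |N n ω| ≤ C) (hσ : IsStoppingTime ℱ σ) (hτ : IsStoppingTime ℱ τ) {n : ℕ}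
    (hσn : ∀ ω, σ ω ≤ n) (hτn : ∀ ω, τ ω ≤ n) :
    ∫ ω, stoppedValue M σ ω * stoppedValue N τ ω ∂P
      = ∫ ω, stoppedValue M (fun ω => min (σ ω) (τ ω)) ω
          * stoppedValue N (fun ω => min (σ ω) (τ ω)) ω ∂P := by
  have hT := hσ.min hτ
  have hTn : ∀ ω, min (σ ω) (τ ω) ≤ n := fun ω => min_le_of_left_le (hσn ω)
  have hMσ := hM.submartingale.integrable_stoppedValue hσ hσn
  have hMT := hM.submartingale.integrable_stoppedValue hT hTn
  have hNτ := hN.submartingale.integrable_stoppedValue hτ hτn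
  have hNT := hN.submartingale.integrable_stoppedValue hT hTn
  set Mσ := stoppedValue M σ
  set MT := stoppedValue M (fun ω => min (σ ω) (τ ω))
  set Nτ := stoppedValue N τ
  set NT := stoppedValue N (fun ω => min (σ ω) (τ ω))
  have hMT_NT : Integrable (MT * NT) P :=
    hN.stronglyAdapted.integrable_mul_stoppedValue_of_bdd hT hNbd hMT
  have hM_incr : Integrable ((Mσ - MT) * NT) P :=
    hN.stronglyAdapted.integrable_mul_stoppedValue_of_bdd hT hNbd (hMσ.sub hMT)
  have hN_incr : Integrable ((Nτ - NT) * MT) P :=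
    hM.stronglyAdapted.integrable_mul_stoppedValue_of_bdd hT hMbd (hNτ.sub hNT)
  have hsplit : ∀ ω,
      Mσ ω * Nτ ω = MT ω * NT ω + (Mσ ω - MT ω) * NT ω + (Nτ ω - NT ω) * MT ω := by
    intro ω
    rcases le_total (σ ω) (τ ω) with h | h
    · simp only [Mσ, MT, Nτ, NT, stoppedValue, min_eq_left h]
      ring
    · simp only [Mσ, MT, Nτ, NT, stoppedValue, min_eq_right h]
      ring
  calc ∫ ω, Mσ ω * Nτ ω ∂P
      = ∫ ω, MT ω * NT ω + (Mσ ω - MT ω) * NT ω + (Nτ ω - NT ω) * MT ω ∂P := by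
        simp_rw [hsplit]
    _ = ∫ ω, MT ω * NT ω ∂P + ∫ ω, (Mσ ω - MT ω) * NT ω ∂P
          + ∫ ω, (Nτ ω - NT ω) * MT ω ∂P := by
        rw [integral_add, integral_add]
        exacts [hMT_NT, hM_incr, hMT_NT.add hM_incr, hN_incr]
    _ = ∫ ω, MT ω * NT ω ∂P := by
        rw [hM.integral_sub_stoppedValue_mul_eq_zero hσ hT (fun ω => min_le_left _ _) hσn
            (hN.stronglyAdapted.stronglyMeasurable_stoppedValue hT) hM_incr,
          hN.integral_sub_stoppedValue_mul_eq_zero hτ hT (fun ω => min_le_right _ _) hτn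
            (hM.stronglyAdapted.stronglyMeasurable_stoppedValue hT) hN_incr,
          add_zero, add_zero]

end Martingale

end MeasureTheory

/-- If `M` and `N` are uniformly bounded martingales and `σ`, `τ` are bounded stopping
times, then `E[M_σ N_τ] = E[M_{σ∧τ} N_{σ∧τ}]`. -/
theorem integral_stopped_product_eq
    {Ω : Type*} {m0 : MeasurableSpace Ω} {P : Measure Ω} [IsProbabilityMeasure P]
    (ℱ : Filtration ℕ m0) (M N : ℕ → Ω → ℝ)
    (hM : Martingale M ℱ P) (hN : Martingale N ℱ P)
    (C : ℝ) (hMbd : ∀ n ω, |M n ω| ≤ C) (hNbd : ∀ n ω, |N n ω| ≤ C)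
    (σ τ : Ω → ℕ) (hσ : IsStoppingTime ℱ (fun ω => (σ ω : WithTop ℕ))) (hτ : IsStoppingTime ℱ (fun ω => (τ ω : WithTop ℕ)))
    (n₀ : ℕ) (hσbd : ∀ ω, σ ω ≤ n₀) (hτbd : ∀ ω, τ ω ≤ n₀) :
    ∫ ω, M (σ ω) ω * N (τ ω) ω ∂P
      = ∫ ω, M (min (σ ω) (τ ω)) ω * N (min (σ ω) (τ ω)) ω ∂P :=
  hM.integral_stoppedValue_mul_eq_min hN hMbd hNbd hσ hτ
    (fun ω => WithTop.coe_le_coe.mpr (hσbd ω)) (fun ω => WithTop.coe_le_coe.mpr (hτbd ω))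
end

section
/- Let κ ∈ (0,4], set s := 8/κ − 1, let r > 1, and let h : [r,∞) → (0,∞) be continuous. Define Λ(x) := h(x)^{s−1} if κ < 4, and Λ(x) := 1/log(max(x/h(x), 2)) if κ = 4. Assume sup{Λ(x)/Λ(y) : r ≤ x ≤ y ≤ 2x} < ∞ and ∫_r^∞ Λ(x) x^{−s} dx < ∞. Then there exists R₀ > r such that h(x) < x/2 for all x ≥ R₀. -/
/-!
If `x / 2 ≤ h x`, then `Λ x * x ^ (1 - s)` is at least a positive constant: for `κ < 4` because
`s ≥ 1`, for `κ = 4` because then `s = 1` and the `max` equals `2`. The regularity condition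
transfers the size of `Λ x` to all of `[x, 2x]`, so `∫_x^{2x} Λ y y^{-s} dy ≳ Λ x x^{1-s}` is
bounded below as well. Integrability makes these integrals tend to zero, so `x / 2 ≤ h x` can
only hold on a bounded set.
-/

open MeasureTheory Filter Topology Set

theorem tendsto_intervalIntegral_of_integrableOn_Ioi {ι : Type*} {l : Filter ι}
    [l.IsCountablyGenerated] {f : ℝ → ℝ} {r : ℝ} (hf : IntegrableOn f (Ioi r)) {a b : ι → ℝ}
    (ha : Tendsto a l atTop) (hb : Tendsto b l atTop) :
    Tendsto (fun i => ∫ y in a i..b i, f y) l (𝓝 0) := by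
  have hlim := (intervalIntegral_tendsto_integral_Ioi r hf hb).sub
    (intervalIntegral_tendsto_integral_Ioi r hf ha)
  rw [sub_self] at hlim
  have hii : ∀ c, r ≤ c → IntervalIntegrable f volume r c := fun c hc =>
    (intervalIntegrable_iff_integrableOn_Ioc_of_le hc).2 (hf.mono_set Ioc_subset_Ioi_self)
  refine hlim.congr' ?_
  filter_upwards [ha.eventually_ge_atTop r, hb.eventually_ge_atTop r] with i hai hbi
  exact intervalIntegral.integral_interval_sub_left (hii _ hbi) (hii _ hai)

theorem rpow_mul_le_mul_intervalIntegral_two_mul {Λ : ℝ → ℝ} {x s C : ℝ} (hx : 0 < x) (hs : 0 ≤ s)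
    (hΛx : 0 ≤ Λ x) (hreg : ∀ y ∈ Icc x (2 * x), Λ x ≤ C * Λ y)
    (hint : IntegrableOn (fun y => Λ y * y ^ (-s)) (Icc x (2 * x))) :
    2 ^ (-s) * (Λ x * x ^ (1 - s)) ≤ C * ∫ y in x..2 * x, Λ y * y ^ (-s) := by
  have hx2 : x ≤ 2 * x := by linarith
  have hpt : ∀ y ∈ Icc x (2 * x), Λ x * (2 * x) ^ (-s) ≤ C * (Λ y * y ^ (-s)) := by
    intro y ⟨hxy, hy2⟩
    have hy : 0 < y := hx.trans_le hxy
    calc Λ x * (2 * x) ^ (-s) ≤ C * Λ y * (2 * x) ^ (-s) := by gcongr; exact hreg y ⟨hxy, hy2⟩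
      _ ≤ C * Λ y * y ^ (-s) :=
          mul_le_mul_of_nonneg_left (Real.rpow_le_rpow_of_nonpos hy hy2 (neg_nonpos.2 hs))
            (hΛx.trans (hreg y ⟨hxy, hy2⟩))
      _ = C * (Λ y * y ^ (-s)) := by ring
  have hmono := intervalIntegral.integral_mono_on hx2 intervalIntegrable_const
    (((intervalIntegrable_iff_integrableOn_Icc_of_le hx2).2 hint).const_mul C) hpt
  rw [intervalIntegral.integral_const, intervalIntegral.integral_const_mul, smul_eq_mul] at hmono
  convert hmono using 1
  rw [Real.mul_rpow zero_le_two hx.le, Real.rpow_sub hx, Real.rpow_one, Real.rpow_neg hx.le]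
  field_simp
  ring

theorem le_ite_mul_rpow_of_half_le {κ s x t : ℝ} (hκ : κ ∈ Ioc (0 : ℝ) 4) (hs : s = 8 / κ - 1)
    (hx : 0 < x) (ht : 0 < t) (hxt : x / 2 ≤ t) :
    (if κ < 4 then (2 : ℝ) ^ (1 - s) else 1 / Real.log 2) ≤
      (if κ < 4 then t ^ (s - 1) else 1 / Real.log (max (x / t) 2)) * x ^ (1 - s) := by
  split_ifs with hκ4
  · have hs1 : 0 ≤ s - 1 := by
      rw [hs, sub_nonneg, le_sub_iff_add_le, le_div_iff₀ hκ.1]; linarith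
    calc (2 : ℝ) ^ (1 - s) = (1 / 2) ^ (s - 1) := by
          rw [one_div, Real.inv_rpow zero_le_two, ← Real.rpow_neg zero_le_two, neg_sub]
      _ ≤ (t / x) ^ (s - 1) :=
          Real.rpow_le_rpow (by norm_num) (by rw [le_div_iff₀ hx]; linarith) hs1
      _ = t ^ (s - 1) * x ^ (1 - s) := by
          rw [Real.div_rpow ht.le hx.le, ← neg_sub s 1, Real.rpow_neg hx.le, div_eq_mul_inv]
  · have hs_eq : s = 1 := by rw [hs, le_antisymm hκ.2 (not_lt.1 hκ4)]; norm_num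
    have hmax : max (x / t) 2 = 2 := max_eq_right (by rw [div_le_iff₀ ht]; linarith)
    rw [hmax, hs_eq, sub_self, Real.rpow_zero, mul_one]

theorem exists_R0_h_lt_half_general
    (κ : ℝ) (hκ : κ ∈ Set.Ioc (0:ℝ) 4) (s : ℝ) (hs : s = 8 / κ - 1)
    (r : ℝ) (hr : 1 < r) (h : ℝ → ℝ)
    (hpos : ∀ x ≥ r, 0 < h x)
    (Λ : ℝ → ℝ)
    (hΛ : ∀ x ≥ r, Λ x =
      if κ < 4 then h x ^ (s - 1) else 1 / Real.log (max (x / h x) 2))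
    (hreg : ∃ C : ℝ, ∀ x y : ℝ, r ≤ x → x ≤ y → y ≤ 2 * x → Λ x / Λ y ≤ C)
    (hint : IntegrableOn (fun x => Λ x * x ^ (-s)) (Set.Ici r)) :
    ∃ R₀ : ℝ, r < R₀ ∧ ∀ x ≥ R₀, h x < x / 2 := by
  obtain ⟨C, hC⟩ := hreg
  have hs0 : 0 ≤ s := by rw [hs, sub_nonneg, le_div_iff₀ hκ.1]; linarith [hκ.2]
  have hΛpos : ∀ x ≥ r, 0 < Λ x := fun x hx => by
    rw [hΛ x hx]
    split_ifs
    · exact Real.rpow_pos_of_pos (hpos x hx) _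
    · exact one_div_pos.2 (Real.log_pos (one_lt_two.trans_le (le_max_right _ _)))
  set c : ℝ := if κ < 4 then (2 : ℝ) ^ (1 - s) else 1 / Real.log 2
  have hc : 0 < c := by unfold c; split_ifs <;> positivity
  have hsmall : Tendsto (fun x => C * ∫ y in x..2 * x, Λ y * y ^ (-s)) atTop (𝓝 0) := by
    simpa using (tendsto_intervalIntegral_of_integrableOn_Ioi (hint.mono_set Ioi_subset_Ici_self)
      tendsto_id (tendsto_id.const_mul_atTop two_pos)).const_mul C
  obtain ⟨R, hR⟩ :=
    eventually_atTop.1 (hsmall.eventually (gt_mem_nhds (by positivity : 0 < 2 ^ (-s) * c)))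
  refine ⟨max R r + 1, by linarith [le_max_right R r], fun x hx => ?_⟩
  have hxR : R ≤ x := by linarith [le_max_left R r]
  have hxr : r ≤ x := by linarith [le_max_right R r]
  by_contra! hhx
  have hlower := rpow_mul_le_mul_intervalIntegral_two_mul (by linarith) hs0 (hΛpos x hxr).le
    (fun y hy => (div_le_iff₀ (hΛpos y (hxr.trans hy.1))).1 (hC x y hxr hy.1 hy.2))
    (hint.mono_set fun y hy => hxr.trans hy.1)
  have hc_le := le_ite_mul_rpow_of_half_le hκ hs (by linarith) (hpos x hxr) hhx
  rw [← hΛ x hxr] at hc_le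
  linarith [hR x hxR, mul_le_mul_of_nonneg_left hc_le (by positivity : (0 : ℝ) ≤ 2 ^ (-s))]

/-- Under the regularity condition (1.2) and the integrability condition (1.3) of the
paper, there exists `R₀ > r` such that `h x < x/2` for all `x ≥ R₀`. -/
theorem exists_R0_h_lt_half
    (κ : ℝ) (hκ : κ ∈ Set.Ioc (0:ℝ) 4) (s : ℝ) (hs : s = 8 / κ - 1)
    (r : ℝ) (hr : 1 < r) (h : ℝ → ℝ)
    (hpos : ∀ x ≥ r, 0 < h x) (hcont : ContinuousOn h (Set.Ici r))
    (Λ : ℝ → ℝ)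
    (hΛ : ∀ x ≥ r, Λ x =
      if κ < 4 then h x ^ (s - 1) else 1 / Real.log (max (x / h x) 2))
    (hreg : ∃ C : ℝ, ∀ x y : ℝ, r ≤ x → x ≤ y → y ≤ 2 * x → Λ x / Λ y ≤ C)
    (hint : IntegrableOn (fun x => Λ x * x ^ (-s)) (Set.Ici r)) :
    ∃ R₀ : ℝ, r < R₀ ∧ ∀ x ≥ R₀, h x < x / 2 :=
  exists_R0_h_lt_half_general κ hκ s hs r hr h hpos Λ hΛ hreg hint
end

section
/- Let r > 1 and let h : [r,∞) → (0,∞) be continuous. In the complex plane define the graph Γ := {x + i·h(x) : x ≥ r}, the right region Θ₊ := {x + i·y : x ≥ r, 0 ≤ y ≤ h(x)}, and the left region Θ₋ := {−x + i·y : x ≥ r, 0 ≤ y ≤ h(x)}. Let R ≥ √(r² + h(r)²). Then every connected set S ⊆ {z ∈ ℂ : Im z ≥ 0 and |z| ≥ R} that intersects both Θ₊ and Θ₋ also intersects Γ. -/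
open Complex Set

/-!
Suppose a connected set `S` in the closed upper half-plane outside `B(0,R)` avoids `Γ`. The only
points of `S` on the vertical line `Re z = r` then lie strictly above `r + i h(r)`, because
`|z| ≥ R ≥ √(r² + h(r)²)`. Hence `S` is covered by two disjoint open sets: the region strictly
right of that line and strictly below `Γ`, and the region left of the line or above (a continuous
extension of) the graph. A point of `Θ₊ ∩ S` lies in the first and a point of `Θ₋ ∩ S` in the
second, contradicting connectedness.
-/

lemma le_im_of_sqrt_le_norm {z : ℂ} {c : ℝ} (him : 0 ≤ z.im) (hz : √(z.re ^ 2 + c ^ 2) ≤ ‖z‖) :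
    c ≤ z.im := by
  rw [norm_eq_sqrt_sq_add_sq, Real.sqrt_le_sqrt_iff (by positivity)] at hz
  exact le_of_sq_le_sq (by linarith) him

section BelowGraph

variable {a : ℝ} {g : ℝ → ℝ}

lemma isOpen_setOf_re_gt_and_im_lt (hg : Continuous g) :
    IsOpen {z : ℂ | a < z.re ∧ z.im < g z.re} :=
  (isOpen_lt continuous_const continuous_re).inter (isOpen_lt continuous_im (hg.comp continuous_re))

lemma isOpen_setOf_re_lt_or_im_gt (hg : Continuous g) :
    IsOpen ({z : ℂ | z.re < a} ∪ {z | g z.re < z.im}) :=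
  (isOpen_lt continuous_re continuous_const).union (isOpen_lt (hg.comp continuous_re) continuous_im)

lemma disjoint_setOf_re_gt_and_im_lt :
    Disjoint {z : ℂ | a < z.re ∧ z.im < g z.re} ({z | z.re < a} ∪ {z | g z.re < z.im}) := by
  refine Set.disjoint_left.2 fun z ⟨hre, him⟩ hz => ?_
  rcases hz with hz | hz
  · exact (lt_asymm hre) hz
  · exact (lt_asymm him) hz

end BelowGraph

theorem IsPreconnected.subset_below_graph {a : ℝ} {f : ℝ → ℝ} (hf : ContinuousOn f (Ici a))
    {S : Set ℂ} (hS : IsPreconnected S) (hgraph : ∀ z ∈ S, a ≤ z.re → z.im ≠ f z.re)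
    (hwall : ∀ z ∈ S, z.re = a → f a ≤ z.im) {w : ℂ} (hw : w ∈ S) (hwre : a ≤ w.re)
    (hwim : w.im ≤ f w.re) :
    S ⊆ {z : ℂ | a < z.re ∧ z.im < f z.re} := by
  set g : ℝ → ℝ := fun x => f (max x a)
  have hg : Continuous g := hf.comp_continuous (by fun_prop) fun x => le_max_right x a
  have hgf : ∀ x, a ≤ x → g x = f x := fun x hx => congrArg f (max_eq_left hx)
  have hwall' : ∀ z ∈ S, z.re = a → f a < z.im := fun z hz hre =>
    (hwall z hz hre).lt_of_ne fun him => hgraph z hz hre.ge (by rw [hre, him])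
  have hcover : S ⊆ {z : ℂ | a < z.re ∧ z.im < g z.re} ∪ ({z | z.re < a} ∪ {z | g z.re < z.im}) := by
    intro z hz
    rcases lt_trichotomy z.re a with hlt | heq | hgt
    · exact Or.inr (Or.inl hlt)
    · refine Or.inr (Or.inr ?_)
      show g z.re < z.im
      rw [heq, hgf a le_rfl]
      exact hwall' z hz heq
    · rcases (hgraph z hz hgt.le).lt_or_gt with hbelow | habove
      · exact Or.inl ⟨hgt, by rwa [hgf _ hgt.le]⟩
      · exact Or.inr (Or.inr (show g z.re < z.im by rwa [hgf _ hgt.le]))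
  have hwre' : a < w.re := hwre.lt_of_ne fun heq => (hwall' w hw heq.symm).not_ge (heq ▸ hwim)
  have hwim' : w.im < g w.re := by
    rw [hgf _ hwre]; exact hwim.lt_of_ne (hgraph w hw hwre)
  intro z hz
  obtain ⟨hzre, hzim⟩ := hS.subset_left_of_subset_union (isOpen_setOf_re_gt_and_im_lt hg)
    (isOpen_setOf_re_lt_or_im_gt hg) disjoint_setOf_re_gt_and_im_lt hcover ⟨w, hw, hwre', hwim'⟩ hz
  exact ⟨hzre, by rwa [← hgf _ hzre.le]⟩

theorem graph_separates_regions_general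
    (r : ℝ) (hr : 1 < r) (h : ℝ → ℝ)
    (hcont : ContinuousOn h (Set.Ici r))
    (R : ℝ) (hR : Real.sqrt (r ^ 2 + h r ^ 2) ≤ R)
    (S : Set ℂ) (hconn : IsPreconnected S)
    (hS : S ⊆ {z : ℂ | 0 ≤ z.im ∧ R ≤ ‖z‖})
    (hplus : (S ∩ {z : ℂ | r ≤ z.re ∧ 0 ≤ z.im ∧ z.im ≤ h z.re}).Nonempty)
    (hminus : (S ∩ {z : ℂ | r ≤ -z.re ∧ 0 ≤ z.im ∧ z.im ≤ h (-z.re)}).Nonempty) :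
    (S ∩ {z : ℂ | r ≤ z.re ∧ z.im = h z.re}).Nonempty := by
  by_contra hΓ
  have hgraph : ∀ z ∈ S, r ≤ z.re → z.im ≠ h z.re := fun z hz hre him => hΓ ⟨z, hz, hre, him⟩
  have hwall : ∀ z ∈ S, z.re = r → h r ≤ z.im := fun z hz hre =>
    le_im_of_sqrt_le_norm (hS hz).1 (by rw [hre]; exact hR.trans (hS hz).2)
  obtain ⟨w, hw, hwre, -, hwim⟩ := hplus
  have hbelow := hconn.subset_below_graph hcont hgraph hwall hw hwre hwim
  obtain ⟨z, hz, hzre, -⟩ := hminus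
  linarith [(hbelow hz).1]

/-- Separation claim of Section 3.2: for `R ≥ √(r² + h(r)²)`, any connected subset of
the closed upper half-plane minus the open disc `B(0,R)` that meets both the right
region `Θ₊` and the left region `Θ₋` must also meet the graph `Γ` of `h`. -/
theorem graph_separates_regions
    (r : ℝ) (hr : 1 < r) (h : ℝ → ℝ)
    (hpos : ∀ x ≥ r, 0 < h x) (hcont : ContinuousOn h (Set.Ici r))
    (R : ℝ) (hR : Real.sqrt (r ^ 2 + h r ^ 2) ≤ R)
    (S : Set ℂ) (hconn : IsPreconnected S)
    (hS : S ⊆ {z : ℂ | 0 ≤ z.im ∧ R ≤ ‖z‖})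
    (hplus : (S ∩ {z : ℂ | r ≤ z.re ∧ 0 ≤ z.im ∧ z.im ≤ h z.re}).Nonempty)
    (hminus : (S ∩ {z : ℂ | r ≤ -z.re ∧ 0 ≤ z.im ∧ z.im ≤ h (-z.re)}).Nonempty) :
    (S ∩ {z : ℂ | r ≤ z.re ∧ z.im = h z.re}).Nonempty :=
  graph_separates_regions_general r hr h hcont R hR S hconn hS hplus hminus
end

section
/- Let r > 1, let s ∈ ℝ, and let Λ : [r,∞) → (0,∞) be continuous with sup{Λ(x)/Λ(y) : r ≤ x ≤ y ≤ 2x} < ∞ and ∫_r^∞ Λ(x) x^{−s} dx < ∞. Then there exists a continuous function ρ : [r,∞) → (0,∞) such that lim_{x→∞} ρ(x)/Λ(x) = ∞, ∫_r^∞ ρ(x) x^{−s} dx < ∞, and sup{ρ(x)/ρ(y) : r ≤ x ≤ y ≤ 2x} < ∞. -/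
/-!
Let `G x = ∫_x^∞ Λ(t) t^{-s} dt`, which is positive, continuous, decreasing and tends to `0`,
and put `ρ = Λ / √G`. Then `ρ / Λ = 1 / √G → ∞`, and `ρ(x) x^{-s}` is the derivative of the
increasing function `-2 √G`, which is bounded above by its limit `0`, so it is integrable.
Since `G` decreases, `ρ x / ρ y ≤ Λ x / Λ y` for `x ≤ y`.
-/

open MeasureTheory Filter Topology Set

theorem div_div_div_le_div_of_le {a b c d : ℝ} (hab : 0 ≤ a / b) (hd : 0 < d) (hdc : d ≤ c) :
    a / c / (b / d) ≤ a / b := by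
  have hc : 0 < c := hd.trans_le hdc
  calc a / c / (b / d) = a / b * (d / c) := by field_simp
    _ ≤ a / b * 1 := by gcongr; exact div_le_one_of_le₀ hdc hc.le
    _ = a / b := mul_one _

section TailIntegral

variable {f : ℝ → ℝ} {a : ℝ}

theorem integral_Ioi_pos (hf : IntegrableOn f (Ioi a)) (hpos : ∀ x > a, 0 < f x) {b : ℝ}
    (hb : a ≤ b) : 0 < ∫ x in Ioi b, f x := by
  have hpos' : ∀ x ∈ Ioi b, 0 < f x := fun x hx => hpos x (hb.trans_lt hx)
  have hnonneg : 0 ≤ᵐ[volume.restrict (Ioi b)] f :=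
    (ae_restrict_iff' measurableSet_Ioi).2 (.of_forall fun x hx => (hpos' x hx).le)
  have hsupp : Function.support f ∩ Ioi b = Ioi b :=
    inter_eq_right.2 fun x hx => (hpos' x hx).ne'
  rw [setIntegral_pos_iff_support_of_nonneg_ae hnonneg (hf.mono_set (Ioi_subset_Ioi hb)), hsupp,
    Real.volume_Ioi]
  exact ENNReal.zero_lt_top

theorem integral_Ioi_antitoneOn (hf : IntegrableOn f (Ioi a)) (hnonneg : ∀ x > a, 0 ≤ f x) :
    AntitoneOn (fun b => ∫ x in Ioi b, f x) (Ici a) := by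
  intro b hb c _ hbc
  refine setIntegral_mono_set (hf.mono_set (Ioi_subset_Ioi hb)) ?_
    (Ioi_subset_Ioi hbc).eventuallyLE
  exact (ae_restrict_iff' measurableSet_Ioi).2
    (.of_forall fun x hx => hnonneg x (lt_of_le_of_lt hb hx))

theorem hasDerivAt_integral_Ioi (hf : IntegrableOn f (Ioi a)) (hcont : ContinuousOn f (Ioi a))
    {x : ℝ} (hx : a < x) : HasDerivAt (fun b => ∫ t in Ioi b, f t) (-f x) x := by
  have hprim : HasDerivAt (fun b => ∫ t in a..b, f t) (f x) x :=
    intervalIntegral.integral_hasDerivAt_right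
      ((intervalIntegrable_iff_integrableOn_Ioc_of_le hx.le).2 (hf.mono_set Ioc_subset_Ioi_self))
      (hcont.stronglyMeasurableAtFilter isOpen_Ioi x hx)
      (hcont.continuousAt (Ioi_mem_nhds hx))
  have htail : (fun b => (∫ t in Ioi a, f t) - ∫ t in a..b, f t) =ᶠ[𝓝 x]
      fun b => ∫ t in Ioi b, f t := by
    filter_upwards [Ioi_mem_nhds hx] with b hb
    rw [← intervalIntegral.integral_Ioi_sub_Ioi hf hb.le, sub_sub_cancel]
  simpa using ((hasDerivAt_const x _).sub hprim).congr_of_eventuallyEq htail.symm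

theorem tendsto_inv_sqrt_integral_Ioi_atTop (hf : IntegrableOn f (Ioi a))
    (hpos : ∀ x > a, 0 < f x) :
    Tendsto (fun x => (√(∫ t in Ioi x, f t))⁻¹) atTop atTop := by
  refine Tendsto.inv_tendsto_nhdsGT_zero (tendsto_nhdsWithin_iff.2 ⟨?_, ?_⟩)
  · simpa using (tendsto_integral_Ioi_zero (f := f) tendsto_id).sqrt
  · filter_upwards [eventually_gt_atTop a] with x hx
    exact Real.sqrt_pos.2 (integral_Ioi_pos hf hpos hx.le)

theorem integrableOn_div_sqrt_integral_Ioi (hf : IntegrableOn f (Ioi a))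
    (hcont : ContinuousOn f (Ioi a)) (hpos : ∀ x > a, 0 < f x) :
    IntegrableOn (fun x => f x / √(∫ t in Ioi x, f t)) (Ioi a) := by
  set G := fun b => ∫ t in Ioi b, f t
  refine integrableOn_Ioi_deriv_of_nonneg (g := fun x => -2 * √(G x)) (l := 0) ?_ ?_ ?_ ?_
  · exact (continuous_const.mul Real.continuous_sqrt).continuousAt.comp_continuousWithinAt
      (hf.continuousOn_Ici_primitive_Ioi a self_mem_Ici)
  · intro x hx
    have hGx : 0 < G x := integral_Ioi_pos hf hpos hx.le
    refine (((hasDerivAt_integral_Ioi hf hcont hx).sqrt hGx.ne').const_mul (-2)).congr_deriv ?_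
    ring
  · exact fun x hx => div_nonneg (hpos x hx).le (Real.sqrt_nonneg _)
  · simpa using (tendsto_integral_Ioi_zero (f := f) tendsto_id).sqrt.const_mul (-2)

end TailIntegral

/-- Existence of the auxiliary weight `ρ` of Section 3.1: given `Λ` positive, continuous,
doubling-regular and with `∫_r^∞ Λ(x) x^{−s} dx < ∞`, there is a continuous positive `ρ`
with `ρ/Λ → ∞`, `∫_r^∞ ρ(x) x^{−s} dx < ∞`, and the same doubling-type regularity. -/
theorem exists_auxiliary_weight
    (r s : ℝ) (hr : 1 < r) (Λ : ℝ → ℝ)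
    (hΛpos : ∀ x ≥ r, 0 < Λ x) (hΛcont : ContinuousOn Λ (Set.Ici r))
    (hreg : ∃ C : ℝ, ∀ x y : ℝ, r ≤ x → x ≤ y → y ≤ 2 * x → Λ x / Λ y ≤ C)
    (hint : IntegrableOn (fun x => Λ x * x ^ (-s)) (Set.Ici r)) :
    ∃ ρ : ℝ → ℝ, ContinuousOn ρ (Set.Ici r) ∧ (∀ x ≥ r, 0 < ρ x) ∧
      Tendsto (fun x => ρ x / Λ x) atTop atTop ∧
      IntegrableOn (fun x => ρ x * x ^ (-s)) (Set.Ici r) ∧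
      ∃ D : ℝ, ∀ x y : ℝ, r ≤ x → x ≤ y → y ≤ 2 * x → ρ x / ρ y ≤ D := by
  obtain ⟨C, hC⟩ := hreg
  set f := fun x : ℝ => Λ x * x ^ (-s)
  have hfpos : ∀ x > r, 0 < f x := fun x hx =>
    mul_pos (hΛpos x hx.le) (Real.rpow_pos_of_pos (by linarith) _)
  have hfcont : ContinuousOn f (Ioi r) :=
    (hΛcont.mono Ioi_subset_Ici_self).mul
      (continuousOn_id.rpow_const fun x hx => Or.inl (zero_lt_one.trans (hr.trans hx)).ne')
  have hfint : IntegrableOn f (Ioi r) := hint.mono_set Ioi_subset_Ici_self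
  set G := fun b => ∫ t in Ioi b, f t
  have hsqrt_pos : ∀ x ≥ r, 0 < √(G x) := fun x hx =>
    Real.sqrt_pos.2 (integral_Ioi_pos hfint hfpos hx)
  refine ⟨fun x => Λ x / √(G x), ?_, fun x hx => div_pos (hΛpos x hx) (hsqrt_pos x hx), ?_, ?_,
    C, fun x y hx hxy hy => ?_⟩
  · exact hΛcont.div (Real.continuous_sqrt.comp_continuousOn hfint.continuousOn_Ici_primitive_Ioi)
      fun x hx => (hsqrt_pos x hx).ne'
  · refine (tendsto_inv_sqrt_integral_Ioi_atTop hfint hfpos).congr' ?_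
    filter_upwards [eventually_ge_atTop r] with x hx
    exact (div_div_cancel_left' (hΛpos x hx).ne').symm
  · rw [integrableOn_Ici_iff_integrableOn_Ioi]
    exact (integrableOn_div_sqrt_integral_Ioi hfint hfcont hfpos).congr_fun
      (fun x _ => (div_mul_eq_mul_div _ _ _).symm) measurableSet_Ioi
  · have hG : G y ≤ G x :=
      integral_Ioi_antitoneOn hfint (fun t ht => (hfpos t ht).le) hx (hx.trans hxy) hxy
    exact (div_div_div_le_div_of_le (div_pos (hΛpos x hx) (hΛpos y (hx.trans hxy))).le
      (hsqrt_pos y (hx.trans hxy)) (Real.sqrt_le_sqrt hG)).trans (hC x y hx hxy hy)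
end

section
/- Let κ ∈ (0,4], set s := 8/κ − 1, let r > 1, and let h : [r,∞) → (0,∞) be continuous with h(x) ≤ x/2 for all x ≥ r. Define Λ(x) := h(x)^{s−1} if κ < 4 and Λ(x) := 1/log(x/h(x)) if κ = 4, and assume C := sup{Λ(x)/Λ(y) : r ≤ x ≤ y ≤ 2x} < ∞. Then there is a finite constant K depending only on κ and C such that for all r ≤ a < b with ∫_a^b Λ(x) x^{−s} dx ≤ 1, one has ∫_a^b ∫_a^x Λ(x) Λ(y) h(x)^{−s} h(y)^{−s} · min{ (h(y)/y)^s , h(x)^s h(y)^s y^{−s} (x−y)^{−s} } dy dx ≤ K. -/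
/-!
Divide the integrand by the one-point density `Λ(y) y^{-s}`: what is left is
`Λ(x) h(x)^{-s} · min {1, (h(x)/(x-y))^s}`. For `y ≤ x/2` the kernel is at most
`(2 h(x)/x)^s`, and the `Λ(y) y^{-s}`-mass of `[a, x]` is at most `1`. For `y ≥ x/2` regularity
gives `Λ(y) y^{-s} ≤ 2^s C Λ(x) x^{-s}`, while `∫₀^x min {1, (h/u)^s} du` is at most
`h s/(s-1)` when `s > 1` and `h (1 + log (x/h))` when `s = 1`; in both cases the factor
`Λ(x) h(x)^{-s}` turns this into a constant. So the inner integral is `O(Λ(x) x^{-s})`, and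
integrating in `x` against the unit mass bounds the double integral.
-/

open MeasureTheory intervalIntegral Set Real

/-- `min {P(y ∈ X), two-point bound} / P(y ∈ X)`, with `H = h(x)` and `u = x - y`. -/
noncomputable def cutoffKernel (s H u : ℝ) : ℝ := min 1 (H ^ s * u ^ (-s))

section cutoffKernel

variable {s H : ℝ}

lemma cutoffKernel_nonneg (hH : 0 ≤ H) {u : ℝ} (hu : 0 ≤ u) : 0 ≤ cutoffKernel s H u :=
  le_min zero_le_one (mul_nonneg (rpow_nonneg hH s) (rpow_nonneg hu _))

lemma cutoffKernel_le_one (u : ℝ) : cutoffKernel s H u ≤ 1 := min_le_left _ _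

lemma cutoffKernel_le (u : ℝ) : cutoffKernel s H u ≤ H ^ s * u ^ (-s) := min_le_right _ _

lemma measurable_cutoffKernel : Measurable (cutoffKernel s H) := by
  unfold cutoffKernel
  fun_prop

lemma intervalIntegrable_cutoffKernel (hH : 0 ≤ H) {p q : ℝ} (hp : 0 ≤ p) (hq : 0 ≤ q) :
    IntervalIntegrable (cutoffKernel s H) volume p q := by
  refine (intervalIntegrable_const (c := (1 : ℝ))).mono_fun'
    measurable_cutoffKernel.aestronglyMeasurable ?_
  filter_upwards [ae_restrict_mem measurableSet_uIoc] with u hu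
  have hu0 : 0 ≤ u := (le_min hp hq).trans hu.1.le
  rw [norm_of_nonneg (cutoffKernel_nonneg hH hu0)]
  exact cutoffKernel_le_one u

lemma integral_cutoffKernel_mono (hH : 0 ≤ H) {T T' : ℝ} (hT : 0 ≤ T) (hTT' : T ≤ T') :
    ∫ u in 0..T, cutoffKernel s H u ≤ ∫ u in 0..T', cutoffKernel s H u := by
  refine integral_mono_interval le_rfl hT hTT' ?_
    (intervalIntegrable_cutoffKernel hH le_rfl (hT.trans hTT'))
  filter_upwards [ae_restrict_mem measurableSet_Ioc] with u hu
  exact cutoffKernel_nonneg hH hu.1.le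

lemma integral_cutoffKernel_le_add (hH : 0 < H) {T : ℝ} (hHT : H ≤ T) :
    ∫ u in 0..T, cutoffKernel s H u ≤ H + H ^ s * ∫ u in H..T, u ^ (-s) := by
  have hT : 0 ≤ T := hH.le.trans hHT
  have h0H : IntervalIntegrable (cutoffKernel s H) volume 0 H :=
    intervalIntegrable_cutoffKernel hH.le le_rfl hH.le
  have hHT' : IntervalIntegrable (cutoffKernel s H) volume H T :=
    intervalIntegrable_cutoffKernel hH.le hH.le hT
  have hpow : IntervalIntegrable (fun u : ℝ => H ^ s * u ^ (-s)) volume H T :=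
    (intervalIntegrable_rpow (Or.inr fun h0 => by
      rw [uIcc_of_le hHT] at h0; linarith [h0.1])).const_mul _
  rw [← integral_add_adjacent_intervals h0H hHT', ← intervalIntegral.integral_const_mul]
  gcongr ?_ + ?_
  · calc ∫ u in 0..H, cutoffKernel s H u ≤ ∫ _ in 0..H, (1 : ℝ) :=
          integral_mono_on hH.le h0H intervalIntegrable_const fun u _ => cutoffKernel_le_one u
      _ = H := by simp
  · exact integral_mono_on hHT hHT' hpow fun u _ => cutoffKernel_le u

lemma integral_rpow_neg_le (hs : 1 < s) (hH : 0 < H) {T : ℝ} (hHT : H ≤ T) :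
    ∫ u in H..T, u ^ (-s) ≤ H ^ (1 - s) / (s - 1) := by
  have h0 : (0 : ℝ) ∉ uIcc H T := fun h0 => by rw [uIcc_of_le hHT] at h0; linarith [h0.1]
  rw [integral_rpow (Or.inr ⟨by linarith, h0⟩), show -s + 1 = -(s - 1) by ring, div_neg,
    ← neg_div, neg_sub, show -(s - 1) = 1 - s by ring]
  have : 0 ≤ T ^ (1 - s) := rpow_nonneg (hH.le.trans hHT) _
  gcongr
  linarith

lemma integral_cutoffKernel_le_of_one_lt (hs : 1 < s) (hH : 0 < H) {T : ℝ} (hT : 0 ≤ T) :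
    ∫ u in 0..T, cutoffKernel s H u ≤ H * (s / (s - 1)) :=
  calc ∫ u in 0..T, cutoffKernel s H u ≤ ∫ u in 0..max T H, cutoffKernel s H u :=
        integral_cutoffKernel_mono hH.le hT (le_max_left _ _)
    _ ≤ H + H ^ s * ∫ u in H..max T H, u ^ (-s) :=
        integral_cutoffKernel_le_add hH (le_max_right _ _)
    _ ≤ H + H ^ s * (H ^ (1 - s) / (s - 1)) := by
        gcongr
        exact integral_rpow_neg_le hs hH (le_max_right _ _)
    _ = H * (s / (s - 1)) := by
        rw [mul_div_assoc', ← rpow_add hH, add_sub_cancel, rpow_one]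
        field_simp [show s - 1 ≠ 0 by linarith]
        ring

lemma integral_cutoffKernel_one_le (hH : 0 < H) {T X : ℝ} (hT : 0 ≤ T) (hTX : T ≤ X)
    (hHX : H ≤ X) :
    ∫ u in 0..T, cutoffKernel 1 H u ≤ H * (1 + log (X / H)) := by
  have h0 : (0 : ℝ) ∉ uIcc H (max T H) := fun h0 => by
    rw [uIcc_of_le (le_max_right _ _)] at h0; linarith [h0.1]
  calc ∫ u in 0..T, cutoffKernel 1 H u ≤ ∫ u in 0..max T H, cutoffKernel 1 H u :=
        integral_cutoffKernel_mono hH.le hT (le_max_left _ _)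
    _ ≤ H + H ^ (1 : ℝ) * ∫ u in H..max T H, u ^ (-1 : ℝ) :=
        integral_cutoffKernel_le_add hH (le_max_right _ _)
    _ = H * (1 + log (max T H / H)) := by
        simp only [rpow_neg_one, rpow_one, integral_inv h0]
        ring
    _ ≤ H * (1 + log (X / H)) := by
        gcongr
        exact max_le hTX hHX

end cutoffKernel

lemma two_point_integrand_eq (s : ℝ) {x y hx hy : ℝ} (hy0 : 0 < y) (hhy : 0 < hy)
    (Λx Λy : ℝ) :
    Λx * Λy * hx ^ (-s) * hy ^ (-s) *
        min ((hy / y) ^ s) (hx ^ s * hy ^ s * y ^ (-s) * (x - y) ^ (-s))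
      = Λx * hx ^ (-s) * (Λy * y ^ (-s) * cutoffKernel s hx (x - y)) := by
  have hmin : min ((hy / y) ^ s) (hx ^ s * hy ^ s * y ^ (-s) * (x - y) ^ (-s))
      = hy ^ s * y ^ (-s) * cutoffKernel s hx (x - y) := by
    rw [cutoffKernel, mul_min_of_nonneg _ _ (by positivity), mul_one, div_rpow hhy.le hy0.le,
      rpow_neg hy0.le, div_eq_mul_inv]
    ring_nf
  rw [hmin, rpow_neg hhy.le]
  field_simp

lemma mul_cutoffKernel_le_add {s C H Lx Ly x y : ℝ} (hs : 0 ≤ s) (hy : 0 < y) (hyx : y ≤ x)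
    (hH : 0 ≤ H) (hLy : 0 ≤ Ly) (hLx : 0 ≤ C * Lx) (hreg : x ≤ 2 * y → Ly ≤ C * Lx) :
    Ly * y ^ (-s) * cutoffKernel s H (x - y)
      ≤ H ^ s * (x / 2) ^ (-s) * (Ly * y ^ (-s))
        + C * Lx * (x / 2) ^ (-s) * cutoffKernel s H (x - y) := by
  have hk : 0 ≤ cutoffKernel s H (x - y) := cutoffKernel_nonneg hH (by linarith)
  have hfy : 0 ≤ Ly * y ^ (-s) := mul_nonneg hLy (rpow_nonneg hy.le _)
  rcases le_or_gt x (2 * y) with hnear | hfar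
  · have hy2 : y ^ (-s) ≤ (x / 2) ^ (-s) :=
      rpow_le_rpow_of_nonpos (by linarith) (by linarith) (by linarith)
    have : Ly * y ^ (-s) ≤ C * Lx * (x / 2) ^ (-s) :=
      mul_le_mul (hreg hnear) hy2 (rpow_nonneg hy.le _) hLx
    have : 0 ≤ H ^ s * (x / 2) ^ (-s) * (Ly * y ^ (-s)) :=
      mul_nonneg (mul_nonneg (rpow_nonneg hH s) (rpow_nonneg (by linarith) _)) hfy
    nlinarith
  · have hk2 : cutoffKernel s H (x - y) ≤ H ^ s * (x / 2) ^ (-s) :=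
      (cutoffKernel_le _).trans <| mul_le_mul_of_nonneg_left
        (rpow_le_rpow_of_nonpos (by linarith) (by linarith) (by linarith)) (rpow_nonneg hH s)
    have : 0 ≤ C * Lx * (x / 2) ^ (-s) * cutoffKernel s H (x - y) :=
      mul_nonneg (mul_nonneg hLx (rpow_nonneg (by linarith) _)) hk
    nlinarith

section SecondMoment

variable {s C M a b : ℝ} {h Λ : ℝ → ℝ}

lemma continuousOn_mul_rpow {f : ℝ → ℝ} (ha : 0 < a) (hf : ContinuousOn f (Icc a b))
    (t : ℝ) :
    ContinuousOn (fun y => f y * y ^ t) (Icc a b) :=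
  hf.mul (continuousOn_id.rpow_const fun _ hy => Or.inl (ha.trans_le hy.1).ne')

lemma integral_mul_cutoffKernel_le (hs : 0 ≤ s) (ha : 0 < a) {x : ℝ} (hax : a ≤ x)
    (hhx : 0 ≤ h x) (hΛ : ∀ y ∈ Icc a x, 0 ≤ Λ y) (hΛcont : ContinuousOn Λ (Icc a x))
    (hCΛx : 0 ≤ C * Λ x) (hreg : ∀ y ∈ Icc a x, x ≤ 2 * y → Λ y ≤ C * Λ x) :
    ∫ y in a..x, Λ y * y ^ (-s) * cutoffKernel s (h x) (x - y)
      ≤ h x ^ s * (x / 2) ^ (-s) * (∫ y in a..x, Λ y * y ^ (-s))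
        + C * Λ x * (x / 2) ^ (-s) * ∫ u in 0..x - a, cutoffKernel s (h x) u := by
  have hfcont : ContinuousOn (fun y => Λ y * y ^ (-s)) (uIcc a x) := by
    rw [uIcc_of_le hax]
    exact continuousOn_mul_rpow ha hΛcont _
  have hf : IntervalIntegrable (fun y => Λ y * y ^ (-s)) volume a x := hfcont.intervalIntegrable
  have hk : IntervalIntegrable (fun y => cutoffKernel s (h x) (x - y)) volume a x := by
    simpa using
      (intervalIntegrable_cutoffKernel (s := s) hhx (sub_nonneg.2 hax) le_rfl).comp_sub_left x
  calc ∫ y in a..x, Λ y * y ^ (-s) * cutoffKernel s (h x) (x - y)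
      ≤ ∫ y in a..x, h x ^ s * (x / 2) ^ (-s) * (Λ y * y ^ (-s))
          + C * Λ x * (x / 2) ^ (-s) * cutoffKernel s (h x) (x - y) :=
        integral_mono_on hax (hk.continuousOn_mul hfcont) ((hf.const_mul _).add (hk.const_mul _))
          fun y hy => mul_cutoffKernel_le_add hs (ha.trans_le hy.1) hy.2 hhx (hΛ y hy) hCΛx
            (hreg y hy)
    _ = _ := by
        rw [integral_add (hf.const_mul _) (hk.const_mul _), intervalIntegral.integral_const_mul,
          intervalIntegral.integral_const_mul, integral_comp_sub_left, sub_self]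

lemma inner_integral_le (hs : 0 ≤ s) (ha : 0 < a) {x : ℝ} (hax : a ≤ x)
    (hh : ∀ y ∈ Icc a x, 0 < h y) (hΛ : ∀ y ∈ Icc a x, 0 < Λ y)
    (hΛcont : ContinuousOn Λ (Icc a x)) (hC : 0 ≤ C)
    (hreg : ∀ y ∈ Icc a x, x ≤ 2 * y → Λ y ≤ C * Λ x)
    (hnear : Λ x * h x ^ (-s) * ∫ u in 0..x - a, cutoffKernel s (h x) u ≤ M)
    (hmass : ∫ y in a..x, Λ y * y ^ (-s) ≤ 1) :
    ∫ y in a..x, Λ x * Λ y * h x ^ (-s) * h y ^ (-s) *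
        min ((h y / y) ^ s) (h x ^ s * h y ^ s * y ^ (-s) * (x - y) ^ (-s))
      ≤ 2 ^ s * (1 + C * M) * (Λ x * x ^ (-s)) := by
  have hx : x ∈ Icc a x := ⟨hax, le_rfl⟩
  have hx0 : 0 < x := ha.trans_le hax
  have hhx := hh x hx
  have hΛx := hΛ x hx
  have hone : h x ^ (-s) * h x ^ s = 1 := by rw [← rpow_add hhx]; simp
  calc ∫ y in a..x, Λ x * Λ y * h x ^ (-s) * h y ^ (-s) *
        min ((h y / y) ^ s) (h x ^ s * h y ^ s * y ^ (-s) * (x - y) ^ (-s))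
      = Λ x * h x ^ (-s) * ∫ y in a..x, Λ y * y ^ (-s) * cutoffKernel s (h x) (x - y) := by
        rw [← intervalIntegral.integral_const_mul]
        refine integral_congr fun y hy => ?_
        rw [uIcc_of_le hax] at hy
        exact two_point_integrand_eq s (ha.trans_le hy.1) (hh y hy) _ _
    _ ≤ Λ x * h x ^ (-s) * (h x ^ s * (x / 2) ^ (-s) * 1
          + C * Λ x * (x / 2) ^ (-s) * ∫ u in 0..x - a, cutoffKernel s (h x) u) := by
        gcongr
        exact (integral_mul_cutoffKernel_le hs ha hax hhx.le (fun y hy => (hΛ y hy).le) hΛcont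
          (mul_nonneg hC hΛx.le) hreg).trans (by gcongr)
    _ = (x / 2) ^ (-s) * Λ x * (h x ^ (-s) * h x ^ s
          + C * (Λ x * h x ^ (-s) * ∫ u in 0..x - a, cutoffKernel s (h x) u)) := by ring
    _ ≤ (x / 2) ^ (-s) * Λ x * (1 + C * M) := by
        rw [hone]
        gcongr
    _ = 2 ^ s * (1 + C * M) * (Λ x * x ^ (-s)) := by
        rw [div_rpow hx0.le zero_le_two, rpow_neg zero_le_two, div_eq_mul_inv, inv_inv]
        ring

lemma double_integral_le (hs : 0 ≤ s) (ha : 0 < a) (hab : a ≤ b)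
    (hh : ∀ x ∈ Icc a b, 0 < h x) (hΛ : ∀ x ∈ Icc a b, 0 < Λ x)
    (hΛcont : ContinuousOn Λ (Icc a b))
    (hreg : ∀ x y : ℝ, a ≤ x → x ≤ y → y ≤ 2 * x → Λ x / Λ y ≤ C)
    (hnear : ∀ x ∈ Icc a b, Λ x * h x ^ (-s) * ∫ u in 0..x - a, cutoffKernel s (h x) u ≤ M)
    (hmass : ∫ x in a..b, Λ x * x ^ (-s) ≤ 1) :
    ∫ x in a..b, ∫ y in a..x, Λ x * Λ y * h x ^ (-s) * h y ^ (-s) *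
        min ((h y / y) ^ s) (h x ^ s * h y ^ s * y ^ (-s) * (x - y) ^ (-s))
      ≤ 2 ^ s * (1 + C * M) := by
  have haI : a ∈ Icc a b := ⟨le_rfl, hab⟩
  have hC : 1 ≤ C := by
    simpa [div_self (hΛ a haI).ne'] using hreg a a le_rfl le_rfl (by linarith)
  have hM : 0 ≤ M := by simpa using hnear a haI
  have hK : 0 ≤ 2 ^ s * (1 + C * M) := by positivity
  have hf : IntervalIntegrable (fun x => Λ x * x ^ (-s)) volume a b := by
    refine ContinuousOn.intervalIntegrable ?_
    rw [uIcc_of_le hab]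
    exact continuousOn_mul_rpow ha hΛcont _
  have hinner : ∀ x ∈ Icc a b, ∫ y in a..x, Λ x * Λ y * h x ^ (-s) * h y ^ (-s) *
        min ((h y / y) ^ s) (h x ^ s * h y ^ s * y ^ (-s) * (x - y) ^ (-s))
      ≤ 2 ^ s * (1 + C * M) * (Λ x * x ^ (-s)) := by
    intro x hx
    have hsub : Icc a x ⊆ Icc a b := Icc_subset_Icc_right hx.2
    refine inner_integral_le hs ha hx.1 (fun y hy => hh y (hsub hy)) (fun y hy => hΛ y (hsub hy))
      (hΛcont.mono hsub) (by linarith) (fun y hy h2 => ?_) (hnear x hx) ?_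
    · rw [← div_le_iff₀ (hΛ x hx)]
      exact hreg y x hy.1 hy.2 h2
    · refine (integral_mono_interval le_rfl hx.1 hx.2 ?_ hf).trans hmass
      filter_upwards [ae_restrict_mem measurableSet_Ioc] with y hy
      exact mul_nonneg (hΛ y ⟨hy.1.le, hy.2⟩).le (rpow_nonneg (ha.trans hy.1).le _)
  by_cases hint : IntervalIntegrable (fun x => ∫ y in a..x,
      Λ x * Λ y * h x ^ (-s) * h y ^ (-s) *
      min ((h y / y) ^ s) (h x ^ s * h y ^ s * y ^ (-s) * (x - y) ^ (-s))) volume a b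
  · calc _ ≤ ∫ x in a..b, 2 ^ s * (1 + C * M) * (Λ x * x ^ (-s)) :=
          integral_mono_on hab hint (hf.const_mul _) hinner
      _ ≤ 2 ^ s * (1 + C * M) * 1 := by
          rw [intervalIntegral.integral_const_mul]
          gcongr
      _ = 2 ^ s * (1 + C * M) := mul_one _
  · rwa [integral_undef hint]

end SecondMoment

noncomputable def lambdaWeight (κ s : ℝ) (h : ℝ → ℝ) (x : ℝ) : ℝ :=
  if κ < 4 then h x ^ (s - 1) else 1 / log (x / h x)

/-- For `κ < 4` this is `s / (s - 1)` with `s = 8/κ - 1`; for `κ = 4` it bounds `Λ(x) + 1`,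
as `x / h x ≥ 2`. -/
noncomputable def nearConst (κ : ℝ) : ℝ :=
  if κ < 4 then (8 / κ - 1) / (8 / κ - 2) else 1 + (log 2)⁻¹

section lambdaWeight

variable {κ s : ℝ} {h : ℝ → ℝ}

lemma one_lt_div_of_le_half {x H : ℝ} (hH : 0 < H) (hHx : H ≤ x / 2) : 1 < x / H := by
  rw [one_lt_div hH]
  linarith

lemma lambdaWeight_pos {x : ℝ} (hx : 0 < h x) (hhalf : h x ≤ x / 2) :
    0 < lambdaWeight κ s h x := by
  unfold lambdaWeight
  split_ifs
  · exact rpow_pos_of_pos hx _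
  · exact one_div_pos.2 (log_pos (one_lt_div_of_le_half hx hhalf))

lemma continuousOn_lambdaWeight {S : Set ℝ} (hcont : ContinuousOn h S)
    (hpos : ∀ x ∈ S, 0 < h x) (hhalf : ∀ x ∈ S, h x ≤ x / 2) :
    ContinuousOn (lambdaWeight κ s h) S := by
  unfold lambdaWeight
  split_ifs
  · exact hcont.rpow_const fun x hx => Or.inl (hpos x hx).ne'
  · have hlt : ∀ x ∈ S, 1 < x / h x := fun x hx =>
      one_lt_div_of_le_half (hpos x hx) (hhalf x hx)
    refine continuousOn_const.div ((continuousOn_id.div hcont fun x hx => (hpos x hx).ne').log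
      fun x hx => ?_) fun x hx => (log_pos (hlt x hx)).ne'
    exact (zero_lt_one.trans (hlt x hx)).ne'

lemma lambdaWeight_mul_integral_cutoffKernel_le (hκ : κ ∈ Ioc 0 4) {x T : ℝ} (hx : 0 < h x)
    (hhalf : h x ≤ x / 2) (hT : 0 ≤ T) (hTx : T ≤ x) :
    lambdaWeight κ (8 / κ - 1) h x * h x ^ (-(8 / κ - 1)) *
        ∫ u in 0..T, cutoffKernel (8 / κ - 1) (h x) u ≤ nearConst κ := by
  obtain ⟨hκ0, hκ4⟩ := hκ
  unfold lambdaWeight nearConst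
  split_ifs with hκ
  · have hs : 1 < 8 / κ - 1 := by
      have : 2 < 8 / κ := by rw [lt_div_iff₀ hκ0]; linarith
      linarith
    calc _ ≤ h x ^ (8 / κ - 1 - 1) * h x ^ (-(8 / κ - 1)) *
          (h x * ((8 / κ - 1) / (8 / κ - 1 - 1))) := by
          gcongr
          exact integral_cutoffKernel_le_of_one_lt hs hx hT
      _ = (8 / κ - 1) / (8 / κ - 2) := by
          rw [← mul_assoc, ← rpow_add hx, ← rpow_add_one hx.ne']
          ring_nf
          simp
  · obtain rfl : κ = 4 := le_antisymm hκ4 (not_lt.1 hκ)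
    have hlog : log 2 ≤ log (x / h x) := log_le_log two_pos (by rw [le_div_iff₀ hx]; linarith)
    have hlog0 : 0 < log (x / h x) := (log_pos one_lt_two).trans_le hlog
    rw [show (8 : ℝ) / 4 - 1 = 1 by norm_num, one_div]
    calc _ ≤ (log (x / h x))⁻¹ * h x ^ (-1 : ℝ) * (h x * (1 + log (x / h x))) := by
          gcongr
          exact integral_cutoffKernel_one_le hx hT hTx (by linarith)
      _ = (log (x / h x))⁻¹ + 1 := by
          rw [rpow_neg_one]
          field_simp
      _ ≤ 1 + (log 2)⁻¹ := by
          have := inv_anti₀ (log_pos one_lt_two) hlog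
          linarith

end lambdaWeight

/-- The analytic second-moment bound of Section 3.2: there is a constant `K` depending
only on `κ` and the regularity constant `C` such that whenever `r ≤ a < b` and
`∫_a^b Λ(x) x^{−s} dx ≤ 1`, the double integral
`∫_a^b ∫_a^x Λ(x)Λ(y) h(x)^{−s} h(y)^{−s} · min{(h(y)/y)^s, h(x)^s h(y)^s y^{−s}(x−y)^{−s}} dy dx`
is at most `K`. -/
theorem second_moment_bound
    (κ : ℝ) (hκ : κ ∈ Set.Ioc (0:ℝ) 4) (C : ℝ) :
    ∃ K : ℝ, ∀ s : ℝ, s = 8 / κ - 1 → ∀ r : ℝ, 1 < r →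
      ∀ h : ℝ → ℝ, ContinuousOn h (Set.Ici r) →
        (∀ x ≥ r, 0 < h x) → (∀ x ≥ r, h x ≤ x / 2) →
      ∀ Λ : ℝ → ℝ,
        (∀ x ≥ r, Λ x = if κ < 4 then h x ^ (s - 1) else 1 / Real.log (x / h x)) →
        (∀ x y : ℝ, r ≤ x → x ≤ y → y ≤ 2 * x → Λ x / Λ y ≤ C) →
      ∀ a b : ℝ, r ≤ a → a < b →
        (∫ x in a..b, Λ x * x ^ (-s)) ≤ 1 →
        (∫ x in a..b, ∫ y in a..x,
            Λ x * Λ y * h x ^ (-s) * h y ^ (-s) *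
              min ((h y / y) ^ s) (h x ^ s * h y ^ s * y ^ (-s) * (x - y) ^ (-s))) ≤ K := by
  refine ⟨2 ^ (8 / κ - 1) * (1 + C * nearConst κ), ?_⟩
  rintro s rfl r hr h hcont hpos hhalf Λ hΛ hreg a b hra hab hmass
  have hsub : Icc a b ⊆ Ici r := fun x hx => hra.trans hx.1
  have hΛeq : EqOn Λ (lambdaWeight κ (8 / κ - 1) h) (Icc a b) := fun x hx => hΛ x (hsub hx)
  have hs : 0 ≤ 8 / κ - 1 := by
    have : 2 ≤ 8 / κ := by rw [le_div_iff₀ hκ.1]; linarith [hκ.2]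
    linarith
  refine double_integral_le hs (by linarith) hab.le (fun x hx => hpos x (hsub hx))
    (fun x hx => hΛeq hx ▸ lambdaWeight_pos (hpos x (hsub hx)) (hhalf x (hsub hx)))
    (((continuousOn_lambdaWeight hcont hpos hhalf).mono hsub).congr hΛeq)
    (fun x y hx => hreg x y (hra.trans hx)) (fun x hx => ?_) hmass
  rw [hΛeq hx]
  exact lambdaWeight_mul_integral_cutoffKernel_le hκ (hpos x (hsub hx)) (hhalf x (hsub hx))
    (by linarith [hx.1]) (by linarith [hx.1, hr])
end
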